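/- Assume q_∞ ≠ 1. If q_∞ · ∏_{H_i ∈ P} q_i ≠ 1 for every maximal family P ⊆ A of at least two mutually parallel lines, then A has no resonant bands, and consequently Ker(∇ : ℂ[RB(A)] → ℂ[ch(A)]) = 0. -/

import Mathlib

open scoped Classical

noncomputable section

abbrev Pt : Type := ℝ × ℝ

/-- An affine-linear functional `a*x + b*y + c` on `ℝ²` with nonzero linear part. -/
structure AffForm : Type where
  a : ℝ
  b : ℝ
  c : ℝ
  nondeg : a ≠ 0 ∨ b ≠ 0

namespace AffForm

def eval (f : AffForm) (p : Pt) : ℝ := f.a * p.1 + f.b * p.2 + f.c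

def line (f : AffForm) : Set Pt := {p | f.eval p = 0}

def Parallel (f g : AffForm) : Prop := f.a * g.b = f.b * g.a

end AffForm

variable {n : ℕ}

/-- An arrangement: at least two distinct affine lines, not all parallel. -/
def IsArrangement (α : Fin n → AffForm) : Prop :=
  2 ≤ n ∧ (∀ i j : Fin n, i ≠ j → (α i).line ≠ (α j).line) ∧
    ∃ i j : Fin n, ¬ (α i).Parallel (α j)

def complement (α : Fin n → AffForm) : Set Pt := {p | ∀ i, (α i).eval p ≠ 0}

/-- A chamber: a connected component of the complement of the union of the lines. -/
def IsChamber (α : Fin n → AffForm) (C : Set Pt) : Prop :=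
  ∃ p ∈ complement α, C = connectedComponentIn (complement α) p

/-- `Sep(C, C')`: the set of indices `i` such that `α i` is positive on one of `C, C'`
and negative on the other. -/
def SepSet (α : Fin n → AffForm) (C C' : Set Pt) : Finset (Fin n) :=
  Finset.univ.filter fun i =>
    ((∀ p ∈ C, 0 < (α i).eval p) ∧ (∀ p ∈ C', (α i).eval p < 0)) ∨
    ((∀ p ∈ C, (α i).eval p < 0) ∧ (∀ p ∈ C', 0 < (α i).eval p))

/-- `Δ(C, C') = ∏_{i ∈ Sep(C,C')} r i − ∏_{i ∈ Sep(C,C')} (r i)⁻¹`. -/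
def Delta (α : Fin n → AffForm) (r : Fin n → ℂ) (C C' : Set Pt) : ℂ :=
  (∏ i ∈ SepSet α C C', r i) - ∏ i ∈ SepSet α C C', (r i)⁻¹

/-- The open strip between two parallel lines `f.line` and `g.line`. -/
def Strip (f g : AffForm) : Set Pt :=
  {p | ∀ q ∈ g.line,
    (0 < f.eval p ∧ f.eval p < f.eval q) ∨ (f.eval q < f.eval p ∧ f.eval p < 0)}

/-- A band: the open strip between two parallel lines of the arrangement containing no
other line of the arrangement parallel to them. -/
def IsBand (α : Fin n → AffForm) (B : Set Pt) : Prop :=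
  ∃ i j : Fin n, i ≠ j ∧ (α i).Parallel (α j) ∧ B = Strip (α i) (α j) ∧
    ∀ k : Fin n, (α k).Parallel (α i) → (α k).line ∩ B = ∅

/-- The data of a band `B` bounded by the parallel lines `H i` and `H j`, together with its
two unbounded chambers `U1` (= `U_1(B)`) and `U2` (= `U_2(B)`). -/
def BandData (α : Fin n → AffForm) (i j : Fin n) (B U1 U2 : Set Pt) : Prop :=
  i ≠ j ∧ (α i).Parallel (α j) ∧ B = Strip (α i) (α j) ∧
  (∀ k : Fin n, (α k).Parallel (α i) → (α k).line ∩ B = ∅) ∧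
  IsChamber α U1 ∧ IsChamber α U2 ∧ U1 ⊆ B ∧ U2 ⊆ B ∧
  ¬ Bornology.IsBounded U1 ∧ ¬ Bornology.IsBounded U2 ∧ U1 ≠ U2

/-- `U1, U2` assign to each band its two unbounded chambers (one at each end). -/
def GoodLabel (α : Fin n → AffForm) (U1 U2 : Set Pt → Set Pt) : Prop :=
  ∀ B : Set Pt, IsBand α B →
    IsChamber α (U1 B) ∧ IsChamber α (U2 B) ∧ U1 B ⊆ B ∧ U2 B ⊆ B ∧
    ¬ Bornology.IsBounded (U1 B) ∧ ¬ Bornology.IsBounded (U2 B) ∧ U1 B ≠ U2 B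

/-- The standing wave `∇(B) = Σ_{C ⊆ B} Δ(U, C)·[C]` (relative to the unbounded
chamber `U` of `B`), an element of `ℂ[ch(A)]`. -/
def wave (α : Fin n → AffForm) (chambers : Finset (Set Pt)) (r : Fin n → ℂ)
    (U B : Set Pt) : Set Pt →₀ ℂ :=
  ∑ C ∈ chambers.filter (fun C => C ⊆ B), Finsupp.single C (Delta α r U C)

/-- The set `RB(A)` of resonant bands (a band `B` is resonant if `Δ(U_1(B), U_2(B)) = 0`). -/
abbrev RBt (α : Fin n → AffForm) (r : Fin n → ℂ) (U1 U2 : Set Pt → Set Pt) : Type :=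
  {B : Set Pt // IsBand α B ∧ Delta α r (U1 B) (U2 B) = 0}

/-- The linear map `∇ : ℂ[RB(A)] → ℂ[ch(A)]` extending `B ↦ ∇(B)`. -/
def nabla (α : Fin n → AffForm) (chambers : Finset (Set Pt)) (r : Fin n → ℂ)
    (U1 U2 : Set Pt → Set Pt) :
    (RBt α r U1 U2 →₀ ℂ) →ₗ[ℂ] (Set Pt →₀ ℂ) :=
  Finsupp.linearCombination ℂ fun B : RBt α r U1 U2 => wave α chambers r (U1 B.1) B.1

/-- A maximal family of at least two mutually parallel lines of the arrangement
(determining a multiple point on the line at infinity). -/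
def MaxParallelFamily (α : Fin n → AffForm) (P : Finset (Fin n)) : Prop :=
  2 ≤ P.card ∧ (∀ i ∈ P, ∀ j ∈ P, (α i).Parallel (α j)) ∧
    ∀ k : Fin n, (∃ i ∈ P, (α k).Parallel (α i)) → k ∈ P

/-! Let `P` be the parallel class of the two lines bounding a band. Lines of `P` have constant
sign on the band, so they never separate its unbounded chambers `U₁, U₂`. A transversal line `k`
has, far out along the band, the sign of `σ · cross(αᵢ, αₖ)`, where `σ = ±1` records the end of the
band; since `U₁ ≠ U₂` they lie at opposite ends, so every transversal line separates them. Hence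
`Sep(U₁, U₂) = Pᶜ`, and `Δ(U₁, U₂) = 0` would force `∏_{Pᶜ} q = 1`, i.e. `q_∞ · ∏_P q = 1`. -/

open Bornology Finset

theorem IsPreconnected.mul_pos_of_forall_ne_zero {X : Type*} [TopologicalSpace X] {S : Set X}
    (hS : IsPreconnected S) {g : X → ℝ} (hg : ContinuousOn g S) (h0 : ∀ p ∈ S, g p ≠ 0)
    {p q : X} (hp : p ∈ S) (hq : q ∈ S) : 0 < g p * g q := by
  have hzero : (0 : ℝ) ∉ Set.uIcc (g p) (g q) := fun h => by
    obtain ⟨x, hx, hx0⟩ :=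
      (hS.image g hg).ordConnected.uIcc_subset ⟨p, hp, rfl⟩ ⟨q, hq, rfl⟩ h
    exact h0 x hx hx0
  rcases (h0 p hp).lt_or_gt with hp0 | hp0 <;> rcases (h0 q hq).lt_or_gt with hq0 | hq0
  · exact mul_pos_of_neg_of_neg hp0 hq0
  · exact (hzero (Set.mem_uIcc_of_le hp0.le hq0.le)).elim
  · exact (hzero (Set.mem_uIcc_of_ge hq0.le hp0.le)).elim
  · exact mul_pos hp0 hq0

theorem exists_pos_of_forall_exists_lt {X : Type*} {U : Set X} {g s h : X → ℝ} {μ : ℝ}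
    (hμ : 0 < μ) (hg : ∀ p ∈ U, g p = μ * s p + h p) (hh : BddBelow (h '' U))
    (hs : ∀ R, ∃ p ∈ U, R < s p) : ∃ p ∈ U, 0 < g p := by
  obtain ⟨K, hK⟩ := hh
  obtain ⟨p, hp, hlt⟩ := hs (-K / μ)
  refine ⟨p, hp, ?_⟩
  have hKp : K ≤ h p := hK ⟨p, hp, rfl⟩
  rw [div_lt_iff₀' hμ] at hlt
  rw [hg p hp]; linarith

namespace AffForm

def toAffineMap (f : AffForm) : Pt →ᵃ[ℝ] ℝ :=
  (f.a • LinearMap.fst ℝ ℝ ℝ + f.b • LinearMap.snd ℝ ℝ ℝ).toAffineMap + AffineMap.const ℝ Pt f.c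

@[simp] theorem coe_toAffineMap (f : AffForm) : ⇑f.toAffineMap = f.eval := by
  ext p; simp [toAffineMap, eval]

theorem continuous_eval (f : AffForm) : Continuous f.eval := by
  unfold eval; fun_prop

theorem convex_eval_preimage (f : AffForm) {s : Set ℝ} (hs : Convex ℝ s) :
    Convex ℝ (f.eval ⁻¹' s) := by
  simpa using hs.affine_preimage f.toAffineMap

theorem normSq_pos (f : AffForm) : 0 < f.a ^ 2 + f.b ^ 2 := by
  rcases f.nondeg with h | h <;> positivity

theorem Parallel.refl (f : AffForm) : f.Parallel f := mul_comm _ _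

theorem Parallel.symm {f g : AffForm} (h : f.Parallel g) : g.Parallel f := by
  unfold Parallel at *; linarith

theorem Parallel.trans {f g h : AffForm} (hfg : f.Parallel g) (hgh : g.Parallel h) :
    f.Parallel h := by
  unfold Parallel at *
  rcases g.nondeg with hg | hg
  · exact mul_left_cancel₀ hg (by linear_combination h.a * hfg + f.a * hgh)
  · exact mul_left_cancel₀ hg (by linear_combination h.b * hfg + f.b * hgh)

def cross (f g : AffForm) : ℝ := f.a * g.b - f.b * g.a

theorem cross_ne_zero {f g : AffForm} (h : ¬ f.Parallel g) : f.cross g ≠ 0 :=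
  fun h0 => h (sub_eq_zero.mp h0)

/-- The coordinate along the direction of `f.line`. -/
def dir (f : AffForm) (p : Pt) : ℝ := f.a * p.2 - f.b * p.1

theorem normSq_mul_eval (f g : AffForm) (p : Pt) :
    (f.a ^ 2 + f.b ^ 2) * g.eval p = f.cross g * f.dir p +
      ((f.a * g.a + f.b * g.b) * (f.eval p - f.c) + (f.a ^ 2 + f.b ^ 2) * g.c) := by
  simp only [eval, cross, dir]; ring

theorem line_nonempty (g : AffForm) : g.line.Nonempty := by
  rcases g.nondeg with h | h
  · exact ⟨(-g.c / g.a, 0), by simp only [line, eval, Set.mem_ofPred_eq]; field_simp; ring⟩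
  · exact ⟨(0, -g.c / g.b), by simp only [line, eval, Set.mem_ofPred_eq]; field_simp; ring⟩

theorem eval_eq_of_parallel {f g : AffForm} (h : f.Parallel g) {p q : Pt}
    (hp : p ∈ g.line) (hq : q ∈ g.line) : f.eval p = f.eval q := by
  simp only [line, eval, Set.mem_ofPred_eq, Parallel] at *
  rcases g.nondeg with hg | hg
  · exact mul_left_cancel₀ hg (by linear_combination f.a * hp - f.a * hq - (p.2 - q.2) * h)
  · exact mul_left_cancel₀ hg (by linear_combination f.b * hp - f.b * hq + (p.1 - q.1) * h)

theorem isBounded_of_isBounded_eval_dir (f : AffForm) {U : Set Pt}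
    (heval : IsBounded (f.eval '' U)) (hdir : IsBounded (f.dir '' U)) : IsBounded U := by
  set N := f.a ^ 2 + f.b ^ 2
  let Ψ : ℝ × ℝ → Pt := fun st =>
    ((f.a * (st.1 - f.c) - f.b * st.2) / N, (f.b * (st.1 - f.c) + f.a * st.2) / N)
  have hΨ : Continuous Ψ := by fun_prop
  have hU : U ⊆ Ψ '' closure ((f.eval '' U) ×ˢ (f.dir '' U)) := by
    intro p hp
    refine ⟨(f.eval p, f.dir p), subset_closure ⟨⟨p, hp, rfl⟩, ⟨p, hp, rfl⟩⟩, ?_⟩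
    have hN := f.normSq_pos
    simp only [Ψ, N, eval, dir]
    ext <;> field_simp <;> ring
  exact ((heval.prod hdir).isCompact_closure.image hΨ).isBounded.subset hU

theorem exists_sign_forall_exists_lt_mul_dir (f : AffForm) {U : Set Pt}
    (hf : IsBounded (f.eval '' U)) (hU : ¬ IsBounded U) :
    ∃ σ : ℝ, (σ = 1 ∨ σ = -1) ∧ ∀ R, ∃ p ∈ U, R < σ * f.dir p := by
  have hdir : ¬ IsBounded (f.dir '' U) := fun h => hU (f.isBounded_of_isBounded_eval_dir hf h)
  rw [isBounded_iff_bddBelow_bddAbove, not_and_or] at hdir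
  rcases hdir with hbelow | habove
  · refine ⟨-1, Or.inr rfl, fun R => ?_⟩
    obtain ⟨_, ⟨p, hp, rfl⟩, hlt⟩ := not_bddBelow_iff.mp hbelow (-R)
    exact ⟨p, hp, by linarith⟩
  · refine ⟨1, Or.inl rfl, fun R => ?_⟩
    obtain ⟨_, ⟨p, hp, rfl⟩, hlt⟩ := not_bddAbove_iff.mp habove R
    exact ⟨p, hp, by linarith⟩

end AffForm

theorem strip_eq_preimage {f g : AffForm} (h : f.Parallel g) {q : Pt} (hq : q ∈ g.line) :
    Strip f g = f.eval ⁻¹' Set.uIoo 0 (f.eval q) := by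
  ext p
  simp only [Strip, Set.mem_ofPred_eq, Set.mem_preimage]
  constructor
  · intro hp
    rcases hp q hq with ⟨h1, h2⟩ | ⟨h1, h2⟩
    · exact Set.Ioo_subset_uIoo ⟨h1, h2⟩
    · exact Set.Ioo_subset_uIoo' ⟨h1, h2⟩
  · intro hp q' hq'
    rw [AffForm.eval_eq_of_parallel h hq' hq]
    rcases le_total 0 (f.eval q) with hc | hc
    · rw [Set.uIoo_of_le hc] at hp; exact Or.inl hp
    · rw [Set.uIoo_of_ge hc] at hp; exact Or.inr hp

theorem convex_strip {f g : AffForm} (h : f.Parallel g) : Convex ℝ (Strip f g) := by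
  obtain ⟨q, hq⟩ := g.line_nonempty
  rw [strip_eq_preimage h hq]
  exact f.convex_eval_preimage (convex_Ioo _ _)

theorem isBounded_eval_image_strip {f g : AffForm} (h : f.Parallel g) :
    IsBounded (f.eval '' Strip f g) := by
  obtain ⟨q, hq⟩ := g.line_nonempty
  rw [strip_eq_preimage h hq]
  exact (Metric.isBounded_Ioo _ _).subset (Set.image_preimage_subset _ _)

namespace IsChamber

variable {α : Fin n → AffForm} {C C' : Set Pt}

theorem nonempty (hC : IsChamber α C) : C.Nonempty := by
  obtain ⟨p, hp, rfl⟩ := hC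
  exact ⟨p, mem_connectedComponentIn hp⟩

theorem subset_complement (hC : IsChamber α C) : C ⊆ complement α := by
  obtain ⟨p, -, rfl⟩ := hC
  exact connectedComponentIn_subset _ _

theorem eq_connectedComponentIn (hC : IsChamber α C) {p : Pt} (hp : p ∈ C) :
    C = connectedComponentIn (complement α) p := by
  obtain ⟨p₀, -, rfl⟩ := hC
  exact connectedComponentIn_eq hp

theorem isPreconnected (hC : IsChamber α C) : IsPreconnected C := by
  obtain ⟨p, -, rfl⟩ := hC
  exact isPreconnected_connectedComponentIn

theorem eval_mul_eval_pos (hC : IsChamber α C) (k : Fin n) {p q : Pt} (hp : p ∈ C)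
    (hq : q ∈ C) : 0 < (α k).eval p * (α k).eval q :=
  hC.isPreconnected.mul_pos_of_forall_ne_zero (α k).continuous_eval.continuousOn
    (fun _ hx => hC.subset_complement hx k) hp hq

theorem eq_of_forall_eval_mul_pos (hC : IsChamber α C) (hC' : IsChamber α C') {p p' : Pt}
    (hp : p ∈ C) (hp' : p' ∈ C') (h : ∀ k, 0 < (α k).eval p * (α k).eval p') : C = C' := by
  set T := ⋂ k, (α k).eval ⁻¹' {t | 0 < t * (α k).eval p}
  have hT : Convex ℝ T := convex_iInter fun k => (α k).convex_eval_preimage <|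
    (convex_Ioi (0 : ℝ)).linear_preimage (LinearMap.mulRight ℝ ((α k).eval p))
  have hTsub : T ⊆ complement α := fun x hx k hx0 => by
    have := Set.mem_iInter.mp hx k
    simp [hx0] at this
  have hpT : p ∈ T := Set.mem_iInter.mpr fun k => mul_self_pos.mpr (hC.subset_complement hp k)
  have hp'T : p' ∈ T := Set.mem_iInter.mpr fun k => by simpa [mul_comm] using h k
  rw [hC.eq_connectedComponentIn hp, hC'.eq_connectedComponentIn hp']
  exact connectedComponentIn_eq (hT.isPreconnected.subset_connectedComponentIn hpT hTsub hp'T)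

theorem mem_sepSet_iff (hC : IsChamber α C) (hC' : IsChamber α C') {p p' : Pt} (hp : p ∈ C)
    (hp' : p' ∈ C') (k : Fin n) :
    k ∈ SepSet α C C' ↔ (α k).eval p * (α k).eval p' < 0 := by
  simp only [SepSet, Finset.mem_filter, Finset.mem_univ, true_and]
  constructor
  · rintro (⟨h₁, h₂⟩ | ⟨h₁, h₂⟩)
    · exact mul_neg_of_pos_of_neg (h₁ p hp) (h₂ p' hp')
    · exact mul_neg_of_neg_of_pos (h₁ p hp) (h₂ p' hp')
  · intro h
    have hC₁ := fun x (hx : x ∈ C) => hC.eval_mul_eval_pos k hx hp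
    have hC₂ := fun x (hx : x ∈ C') => hC'.eval_mul_eval_pos k hx hp'
    rcases (hC.subset_complement hp k).lt_or_gt with hneg | hpos
    · have : 0 < (α k).eval p' := by nlinarith
      exact Or.inr ⟨fun x hx => by nlinarith [hC₁ x hx], fun x hx => by nlinarith [hC₂ x hx]⟩
    · have : (α k).eval p' < 0 := by nlinarith
      exact Or.inl ⟨fun x hx => by nlinarith [hC₁ x hx], fun x hx => by nlinarith [hC₂ x hx]⟩

theorem pos_mul_eval_of_forall_exists_lt (hC : IsChamber α C) {f : AffForm}
    (hf : IsBounded (f.eval '' C)) {σ : ℝ} (hσ : ∀ R, ∃ p ∈ C, R < σ * f.dir p) {k : Fin n}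
    (hk : ¬ f.Parallel (α k)) {p : Pt} (hp : p ∈ C) :
    0 < σ * f.cross (α k) * (α k).eval p := by
  set c := f.cross (α k)
  set N := f.a ^ 2 + f.b ^ 2
  -- `σ c N αₖ = c² (σ dir) + φ ∘ f.eval`, and `φ ∘ f.eval` is bounded on `C`
  set φ : ℝ → ℝ := fun t => σ * c * ((f.a * (α k).a + f.b * (α k).b) * (t - f.c) + N * (α k).c)
  have hφ : BddBelow ((φ ∘ f.eval) '' C) := by
    rw [Set.image_comp]
    exact ((hf.isCompact_closure.image (by fun_prop : Continuous φ)).isBounded.subset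
      (Set.image_mono subset_closure)).bddBelow
  obtain ⟨p₀, hp₀, hpos⟩ := exists_pos_of_forall_exists_lt
    (g := fun x => N * (σ * c * (α k).eval x)) (μ := c ^ 2)
    (sq_pos_of_ne_zero (f.cross_ne_zero hk)) (fun x _ => by
      simp only [φ, Function.comp_apply]; linear_combination σ * c * f.normSq_mul_eval (α k) x)
    hφ hσ
  have h₀ : 0 < σ * c * (α k).eval p₀ := pos_of_mul_pos_right hpos f.normSq_pos.le
  exact pos_of_mul_pos_left (b := (α k).eval p₀ ^ 2)
    (by convert mul_pos h₀ (hC.eval_mul_eval_pos k hp₀ hp) using 1; ring) (sq_nonneg _)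

end IsChamber

theorem sepSet_eq_of_band {α : Fin n → AffForm} {i j : Fin n} (hpar : (α i).Parallel (α j))
    (hband : ∀ k, (α k).Parallel (α i) → (α k).line ∩ Strip (α i) (α j) = ∅)
    {C₁ C₂ : Set Pt} (hC₁ : IsChamber α C₁) (hC₂ : IsChamber α C₂)
    (hsub₁ : C₁ ⊆ Strip (α i) (α j)) (hsub₂ : C₂ ⊆ Strip (α i) (α j))
    (hunb₁ : ¬ IsBounded C₁) (hunb₂ : ¬ IsBounded C₂) (hne : C₁ ≠ C₂) :
    SepSet α C₁ C₂ = univ.filter fun k => ¬ (α k).Parallel (α i) := by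
  obtain ⟨p₁, hp₁⟩ := hC₁.nonempty
  obtain ⟨p₂, hp₂⟩ := hC₂.nonempty
  have hbdd₁ := (isBounded_eval_image_strip hpar).subset (Set.image_mono hsub₁)
  have hbdd₂ := (isBounded_eval_image_strip hpar).subset (Set.image_mono hsub₂)
  obtain ⟨σ₁, hσ₁, hup₁⟩ := (α i).exists_sign_forall_exists_lt_mul_dir hbdd₁ hunb₁
  obtain ⟨σ₂, hσ₂, hup₂⟩ := (α i).exists_sign_forall_exists_lt_mul_dir hbdd₂ hunb₂
  have hparallel (k : Fin n) (hk : (α k).Parallel (α i)) :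
      0 < (α k).eval p₁ * (α k).eval p₂ :=
    (convex_strip hpar).isPreconnected.mul_pos_of_forall_ne_zero
      (α k).continuous_eval.continuousOn
      (fun x hx hx0 => Set.eq_empty_iff_forall_notMem.mp (hband k hk) x ⟨hx0, hx⟩)
      (hsub₁ hp₁) (hsub₂ hp₂)
  have htransversal (k : Fin n) (hk : ¬ (α k).Parallel (α i)) :
      0 < σ₁ * σ₂ * ((α k).eval p₁ * (α k).eval p₂) := by
    have hk' : ¬ (α i).Parallel (α k) := fun h => hk h.symm
    have h₁ := hC₁.pos_mul_eval_of_forall_exists_lt hbdd₁ hup₁ hk' hp₁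
    have h₂ := hC₂.pos_mul_eval_of_forall_exists_lt hbdd₂ hup₂ hk' hp₂
    exact pos_of_mul_pos_left (b := (α i).cross (α k) ^ 2)
      (by convert mul_pos h₁ h₂ using 1; ring) (sq_nonneg _)
  -- otherwise all forms would have the same sign at `p₁` and `p₂`
  have hσ : σ₁ * σ₂ = -1 := by
    rcases hσ₁ with rfl | rfl <;> rcases hσ₂ with rfl | rfl <;> norm_num <;>
    exact hne (hC₁.eq_of_forall_eval_mul_pos hC₂ hp₁ hp₂ fun k => by
      by_cases hk : (α k).Parallel (α i)
      · exact hparallel k hk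
      · simpa using htransversal k hk)
  ext k
  rw [hC₁.mem_sepSet_iff hC₂ hp₁ hp₂, Finset.mem_filter, and_iff_right (Finset.mem_univ k)]
  by_cases hk : (α k).Parallel (α i)
  · simpa [hk] using (hparallel k hk).le
  · simpa [hk, hσ] using htransversal k hk

theorem maxParallelFamily_filter_parallel {α : Fin n → AffForm} {i j : Fin n} (hij : i ≠ j)
    (hpar : (α i).Parallel (α j)) :
    MaxParallelFamily α (univ.filter fun k => (α k).Parallel (α i)) := by
  refine ⟨Finset.one_lt_card.mpr ⟨i, ?_, j, ?_, hij⟩, fun a ha b hb => ?_, ?_⟩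
  · simpa using AffForm.Parallel.refl (α i)
  · simpa using hpar.symm
  · simp only [Finset.mem_filter, Finset.mem_univ, true_and] at ha hb
    exact ha.trans hb.symm
  · rintro k ⟨l, hl, hkl⟩
    simp only [Finset.mem_filter, Finset.mem_univ, true_and] at hl ⊢
    exact hkl.trans hl

theorem Finset.prod_sq_eq_one_of_prod_eq_prod_inv {ι G : Type*} [CommGroupWithZero G]
    {s : Finset ι} {r : ι → G} (hr : ∀ i ∈ s, r i ≠ 0) (h : ∏ i ∈ s, r i = ∏ i ∈ s, (r i)⁻¹) :
    ∏ i ∈ s, r i ^ 2 = 1 := by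
  rw [prod_inv_distrib] at h
  rw [prod_pow, sq]
  nth_rewrite 2 [h]
  exact mul_inv_cancel₀ (prod_ne_zero_iff.mpr hr)

theorem statement8_general {n : ℕ} (α : Fin n → AffForm)
    (chambers : Finset (Set Pt))
    (q r : Fin n → ℂ) (hr0 : ∀ i, r i ≠ 0) (hrq : ∀ i, r i ^ 2 = q i)
    (U1 U2 : Set Pt → Set Pt) (hU : GoodLabel α U1 U2)
    (hnores : ∀ P : Finset (Fin n), MaxParallelFamily α P →
      (∏ i, q i)⁻¹ * ∏ i ∈ P, q i ≠ 1) :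
    (∀ B : Set Pt, IsBand α B → Delta α r (U1 B) (U2 B) ≠ 0) ∧
    LinearMap.ker (nabla α chambers r U1 U2) = ⊥ := by
  have hres (B : Set Pt) (hB : IsBand α B) : Delta α r (U1 B) (U2 B) ≠ 0 := by
    obtain ⟨hC₁, hC₂, hsub₁, hsub₂, hunb₁, hunb₂, hne⟩ := hU B hB
    obtain ⟨i, j, hij, hpar, rfl, hband⟩ := hB
    set P := univ.filter fun k => (α k).Parallel (α i)
    have hsep : SepSet α (U1 (Strip (α i) (α j))) (U2 (Strip (α i) (α j))) = Pᶜ := by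
      rw [sepSet_eq_of_band hpar hband hC₁ hC₂ hsub₁ hsub₂ hunb₁ hunb₂ hne, Finset.compl_filter]
    intro hΔ
    have hPc : ∏ k ∈ Pᶜ, q k = 1 := by
      simp_rw [← hrq, ← hsep]
      exact prod_sq_eq_one_of_prod_eq_prod_inv (fun k _ => hr0 k) (sub_eq_zero.mp hΔ)
    have hP : ∏ k ∈ P, q k ≠ 0 := prod_ne_zero_iff.mpr fun k _ => hrq k ▸ pow_ne_zero 2 (hr0 k)
    apply hnores P (maxParallelFamily_filter_parallel hij hpar)
    rw [← prod_mul_prod_compl P q, hPc, mul_one, inv_mul_cancel₀ hP]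
  have : IsEmpty (RBt α r U1 U2) := ⟨fun B => hres B.1 B.2.1 B.2.2⟩
  exact ⟨hres, Submodule.eq_bot_of_subsingleton⟩

/-- Assume `q_∞ ≠ 1`. If `q_∞ · ∏_{H i ∈ P} q i ≠ 1` for every maximal
family `P ⊆ A` of at least two mutually parallel lines, then `A` has no resonant bands,
and consequently `Ker(∇ : ℂ[RB(A)] → ℂ[ch(A)]) = 0`. -/
theorem statement8 {n : ℕ} (α : Fin n → AffForm) (hA : IsArrangement α)
    (chambers : Finset (Set Pt)) (hch : ∀ C : Set Pt, C ∈ chambers ↔ IsChamber α C)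
    (q r : Fin n → ℂ) (hq : ∀ i, q i ≠ 0) (hr0 : ∀ i, r i ≠ 0) (hrq : ∀ i, r i ^ 2 = q i)
    (U1 U2 : Set Pt → Set Pt) (hU : GoodLabel α U1 U2)
    (hqinf : (∏ i, q i)⁻¹ ≠ 1)
    (hnores : ∀ P : Finset (Fin n), MaxParallelFamily α P →
      (∏ i, q i)⁻¹ * ∏ i ∈ P, q i ≠ 1) :
    (∀ B : Set Pt, IsBand α B → Delta α r (U1 B) (U2 B) ≠ 0) ∧
    LinearMap.ker (nabla α chambers r U1 U2) = ⊥ :=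
  statement8_general α chambers q r hr0 hrq U1 U2 hU hnores

end
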